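/- Let R be a reduced root system with positive system, A a set of pairwise strongly orthogonal roots satisfying property ## with respect to this positive system, and A₂ ⊂ A, β > 0 such that S_{A₂}(β) < 0. Then there exists α ∈ A₂ such that s_α(β) < 0. -/

import Mathlib

open scoped InnerProductSpace

variable {V : Type*} [NormedAddCommGroup V] [InnerProductSpace ℝ V]

/-- The (orthogonal) reflection in the root `α`: `s_α(v) = v - (2⟪v,α⟫/⟪α,α⟫)α`. -/
noncomputable def sRefl (α v : V) : V := v - (2 * ⟪v, α⟫_ℝ / ⟪α, α⟫_ℝ) • α

/-- The coroot of `α`, identified with a vector via the invariant inner product. -/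
noncomputable def coroot (α : V) : V := (2 / ⟪α, α⟫_ℝ) • α

/-- `S_A`: the product of the (commuting) reflections in the pairwise orthogonal
elements of `A`, given by its closed formula. -/
noncomputable def SRefl (A : Finset V) (v : V) : V :=
  v - ∑ α ∈ A, (2 * ⟪v, α⟫_ℝ / ⟪α, α⟫_ℝ) • α

/-- A (reduced) root system in `V`, with the ambient inner product Weyl-invariant. -/
structure IsRootSystem (R : Set V) : Prop where
  finite : R.Finite
  nonempty : R.Nonempty
  ne_zero : ∀ α ∈ R, α ≠ (0 : V)
  refl_mem : ∀ α ∈ R, ∀ β ∈ R, sRefl α β ∈ R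
  integral : ∀ α ∈ R, ∀ β ∈ R, ∃ n : ℤ, 2 * ⟪β, α⟫_ℝ / ⟪α, α⟫_ℝ = (n : ℝ)
  reduced : ∀ α ∈ R, ∀ t : ℝ, t • α ∈ R → t = 1 ∨ t = -1

/-- `α` and `β` are strongly orthogonal: neither their sum nor difference is a root. -/
def StronglyOrthogonal (R : Set V) (α β : V) : Prop := α + β ∉ R ∧ α - β ∉ R

/-- A strongly orthogonal subset of `R`. -/
def IsSOS (R A : Set V) : Prop := A ⊆ R ∧ A.Pairwise (StronglyOrthogonal R)

/-- A choice of positive roots in `R`. -/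
structure IsPositiveSystem (R P : Set V) : Prop where
  subset : P ⊆ R
  mem_or_neg_mem : ∀ α ∈ R, α ∈ P ∨ -α ∈ P
  not_both : ∀ α ∈ P, -α ∉ P
  add_mem : ∀ α ∈ P, ∀ β ∈ P, α + β ∈ R → α + β ∈ P

/-- Property `#(R,>,A)`: for distinct `α₁, α₂ ∈ A` and `β > 0`,
`s_{α₁}(β) < 0` implies `s_{α₂}(β) > 0`. -/
def PropSharp (P A : Set V) : Prop :=
  ∀ α₁ ∈ A, ∀ α₂ ∈ A, α₁ ≠ α₂ → ∀ β ∈ P, -(sRefl α₁ β) ∈ P → sRefl α₂ β ∈ P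

/-- Property `##(R,>,A)`: for disjoint `A₁, A₂ ⊆ A` and `β > 0` with `S_{A₁}(β) < 0`
one has `S_{A₂}(β) > 0` and `S_{A₁}S_{A₂}(β) < 0`. -/
def PropSharpSharp (P : Set V) (A : Finset V) : Prop :=
  ∀ A₁ ⊆ A, ∀ A₂ ⊆ A, Disjoint A₁ A₂ → ∀ β ∈ P, -(SRefl A₁ β) ∈ P →
    SRefl A₂ β ∈ P ∧ -(SRefl A₁ (SRefl A₂ β)) ∈ P

/-- `R⁺_B = {β : β > 0 ∧ S_B(β) < 0}`. -/
noncomputable def RPlus (P : Set V) (B : Finset V) : Set V :=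
  {β | β ∈ P ∧ -(SRefl B β) ∈ P}

/-!
Roots of a strongly orthogonal set that are not opposite are orthogonal, and `##` for `{α}, {-α}`
rules out opposite pairs in `A`; so the reflections in `A` commute and `S_{insert a s} = S_s ∘ s_a`.
Induct on `A₂ = insert a s`: if `s_a β > 0`, the induction hypothesis at `s_a β` gives `γ ∈ s`
with `s_γ s_a β < 0`; were also `s_γ β > 0`, then `##` for `{a}, {γ}` at `s_γ β` (where
`s_a s_γ β = s_γ s_a β < 0`) would give `s_a s_γ s_γ β = s_a β < 0`.
-/

section Reflections

variable {α γ : V}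

lemma sRefl_self (h : ⟪α, α⟫_ℝ ≠ 0) : sRefl α α = -α := by
  rw [sRefl, mul_div_assoc, div_self h, mul_one]
  module

lemma sRefl_neg_left (α v : V) : sRefl (-α) v = sRefl α v := by
  simp only [sRefl, inner_neg_left, inner_neg_right, neg_neg, mul_neg, neg_div, neg_smul, smul_neg]

lemma sRefl_sRefl (h : ⟪α, α⟫_ℝ ≠ 0) (v : V) : sRefl α (sRefl α v) = v := by
  simp only [sRefl, inner_sub_left, real_inner_smul_left]
  match_scalars <;> field_simp
  ring

lemma sRefl_comm_of_inner_eq_zero (h : ⟪α, γ⟫_ℝ = 0) (v : V) :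
    sRefl γ (sRefl α v) = sRefl α (sRefl γ v) := by
  simp only [sRefl, inner_sub_left, real_inner_smul_left, h, real_inner_comm α γ ▸ h,
    mul_zero, sub_zero]
  module

lemma SRefl_singleton (α v : V) : SRefl {α} v = sRefl α v := by
  simp [SRefl, sRefl]

lemma SRefl_insert [DecidableEq V] {s : Finset V} (hα : α ∉ s)
    (horth : ∀ γ ∈ s, ⟪α, γ⟫_ℝ = 0) (v : V) :
    SRefl (insert α s) v = SRefl s (sRefl α v) := by
  have hcoeff : ∀ γ ∈ s,
      (2 * ⟪sRefl α v, γ⟫_ℝ / ⟪γ, γ⟫_ℝ) • γ = (2 * ⟪v, γ⟫_ℝ / ⟪γ, γ⟫_ℝ) • γ := by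
    intro γ hγ
    rw [sRefl, inner_sub_left, real_inner_smul_left, horth γ hγ, mul_zero, sub_zero]
  rw [SRefl, SRefl, Finset.sum_insert hα, Finset.sum_congr rfl hcoeff, sRefl]
  abel

end Reflections

namespace IsRootSystem

variable {R : Set V} (hR : IsRootSystem R) {α γ : V}
include hR

lemma inner_self_pos (hα : α ∈ R) : 0 < ⟪α, α⟫_ℝ :=
  real_inner_self_pos.mpr (hR.ne_zero α hα)

lemma neg_mem (hα : α ∈ R) : -α ∈ R := by
  simpa [sRefl_self (hR.inner_self_pos hα).ne'] using hR.refl_mem α hα α hα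

/-- The Cartan integers `n = 2⟪γ,α⟫/⟪α,α⟫` and `m = 2⟪α,γ⟫/⟪γ,γ⟫` are positive with `n m ≤ 4` by
Cauchy–Schwarz; `m = 1` or `n = 1` exhibits `α - γ` as `s_γ α` or `-s_α γ`, and `n = m = 2`
forces `α = γ`. -/
lemma sub_mem_of_inner_pos (hα : α ∈ R) (hγ : γ ∈ R) (hpos : 0 < ⟪α, γ⟫_ℝ) (hne : α ≠ γ) :
    α - γ ∈ R := by
  have hαα := hR.inner_self_pos hα
  have hγγ := hR.inner_self_pos hγ
  have hcomm : ⟪γ, α⟫_ℝ = ⟪α, γ⟫_ℝ := real_inner_comm α γ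
  obtain ⟨n, hn⟩ := hR.integral α hα γ hγ
  obtain ⟨m, hm⟩ := hR.integral γ hγ α hα
  by_cases hm1 : m = 1
  · have hs : sRefl γ α = α - γ := by rw [sRefl, hm, hm1, Int.cast_one, one_smul]
    exact hs ▸ hR.refl_mem γ hγ α hα
  by_cases hn1 : n = 1
  · have hs : sRefl α γ = -(α - γ) := by rw [sRefl, hn, hn1, Int.cast_one, one_smul, neg_sub]
    rw [← neg_neg (α - γ), ← hs]
    exact hR.neg_mem (hR.refl_mem α hα γ hγ)
  have hn_pos : (0 : ℝ) < n := hn ▸ by rw [hcomm]; positivity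
  have hm_pos : (0 : ℝ) < m := hm ▸ by positivity
  have hnm : (n : ℝ) * m ≤ 4 := by
    rw [← hn, ← hm, hcomm, div_mul_div_comm, div_le_iff₀ (by positivity)]
    nlinarith [real_inner_mul_inner_self_le α γ]
  have hnm' : n * m ≤ 4 := by exact_mod_cast hnm
  have hn0 : 0 < n := by exact_mod_cast hn_pos
  have hm0 : 0 < m := by exact_mod_cast hm_pos
  obtain ⟨rfl, rfl⟩ : n = 2 ∧ m = 2 := by
    have : 2 ≤ n := by omega
    have : 2 ≤ m := by omega
    constructor <;> nlinarith
  exfalso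
  have hαγ : ⟪α, γ⟫_ℝ = ⟪α, α⟫_ℝ := by field_simp at hn; push_cast at hn; linarith
  have hγγ' : ⟪α, γ⟫_ℝ = ⟪γ, γ⟫_ℝ := by field_simp at hm; push_cast at hm; linarith
  refine hne (sub_eq_zero.mp (inner_self_eq_zero (𝕜 := ℝ).mp ?_))
  rw [real_inner_sub_sub_self]
  linarith

lemma inner_eq_zero_of_stronglyOrthogonal (hα : α ∈ R) (hγ : γ ∈ R)
    (hso : StronglyOrthogonal R α γ) (hne : α ≠ γ) (hne_neg : α ≠ -γ) : ⟪α, γ⟫_ℝ = 0 := by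
  rcases lt_trichotomy ⟪α, γ⟫_ℝ 0 with hneg | hzero | hpos
  · have hpos' : 0 < ⟪α, -γ⟫_ℝ := by rw [inner_neg_right]; linarith
    exact absurd (sub_neg_eq_add α γ ▸ hR.sub_mem_of_inner_pos hα (hR.neg_mem hγ) hpos' hne_neg)
      hso.1
  · exact hzero
  · exact absurd (hR.sub_mem_of_inner_pos hα hγ hpos hne) hso.2

end IsRootSystem

namespace PropSharpSharp

variable {P : Set V} {A : Finset V} (hsharp : PropSharpSharp P A)
include hsharp

lemma neg_sRefl_sRefl_mem {α γ : V} (hα : α ∈ A) (hγ : γ ∈ A) (hne : α ≠ γ) {β : V}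
    (hβ : β ∈ P) (hαβ : -(sRefl α β) ∈ P) : -(sRefl α (sRefl γ β)) ∈ P := by
  have h := (hsharp {α} (by simpa using hα) {γ} (by simpa using hγ)
    (Finset.disjoint_singleton.mpr hne) β hβ (by rwa [SRefl_singleton])).2
  rwa [SRefl_singleton, SRefl_singleton] at h

lemma sRefl_mem {α γ : V} (hα : α ∈ A) (hγ : γ ∈ A) (hne : α ≠ γ) {β : V}
    (hβ : β ∈ P) (hαβ : -(sRefl α β) ∈ P) : sRefl γ β ∈ P := by
  have h := (hsharp {α} (by simpa using hα) {γ} (by simpa using hγ)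
    (Finset.disjoint_singleton.mpr hne) β hβ (by rwa [SRefl_singleton])).1
  rwa [SRefl_singleton] at h

lemma neg_notMem (hP : ∀ β ∈ P, -β ∉ P) {α : V} (hα0 : α ≠ 0) (hαA : α ∈ A) (hαP : α ∈ P) :
    -α ∉ A := by
  intro hnα
  have hαα : ⟪α, α⟫_ℝ ≠ 0 := inner_self_ne_zero.mpr hα0
  have hne : α ≠ -α := fun h => hα0 (by simpa [eq_neg_iff_add_eq_zero, ← two_smul ℝ] using h)
  have h := hsharp.sRefl_mem hαA hnα hne hαP (by rwa [sRefl_self hαα, neg_neg])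
  rw [sRefl_neg_left, sRefl_self hαα] at h
  exact hP α hαP h

end PropSharpSharp

lemma IsPositiveSystem.sRefl_mem_of_neg_notMem {R P : Set V} (hP : IsPositiveSystem R P)
    (hR : IsRootSystem R) {α β : V} (hα : α ∈ R) (hβ : β ∈ P) (hαβ : -(sRefl α β) ∉ P) :
    sRefl α β ∈ P :=
  (hP.mem_or_neg_mem _ (hR.refl_mem α hα β (hP.subset hβ))).resolve_right hαβ

lemma IsSOS.pairwise_inner_eq_zero {R P : Set V} {A : Finset V} (hR : IsRootSystem R)
    (hP : IsPositiveSystem R P) (hA : IsSOS R ↑A) (hsharp : PropSharpSharp P A) :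
    (A : Set V).Pairwise fun α γ => ⟪α, γ⟫_ℝ = 0 := by
  intro α hα γ hγ hne
  have hαR := hA.1 hα
  have hγR := hA.1 hγ
  refine hR.inner_eq_zero_of_stronglyOrthogonal hαR hγR (hA.2 hα hγ hne) hne ?_
  rintro rfl
  rcases hP.mem_or_neg_mem γ hγR with hγP | hγP
  · exact hsharp.neg_notMem hP.not_both (hR.ne_zero γ hγR) hγ hγP hα
  · exact hsharp.neg_notMem hP.not_both (hR.ne_zero _ hαR) hα hγP (by simpa using hγ)

theorem PropSharpSharp.exists_neg_sRefl_mem {R P : Set V} {A : Finset V} (hR : IsRootSystem R)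
    (hP : IsPositiveSystem R P) (hAR : ↑A ⊆ R)
    (horth : (A : Set V).Pairwise fun α γ => ⟪α, γ⟫_ℝ = 0) (hsharp : PropSharpSharp P A)
    {B : Finset V} (hB : B ⊆ A) {β : V} (hβ : β ∈ P) (hneg : -(SRefl B β) ∈ P) :
    ∃ α ∈ B, -(sRefl α β) ∈ P := by
  classical
  induction B using Finset.induction_on generalizing β with
  | empty => exact absurd (by simpa [SRefl] using hneg) (hP.not_both β hβ)
  | @insert a s ha ih =>
    have haA : a ∈ A := hB (Finset.mem_insert_self a s)
    have hsA : s ⊆ A := (Finset.subset_insert a s).trans hB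
    have hne : ∀ γ ∈ s, a ≠ γ := fun γ hγ h => ha (h ▸ hγ)
    have horth_a : ∀ γ ∈ s, ⟪a, γ⟫_ℝ = 0 := fun γ hγ => horth haA (hsA hγ) (hne γ hγ)
    by_cases haβ : -(sRefl a β) ∈ P
    · exact ⟨a, Finset.mem_insert_self a s, haβ⟩
    rw [SRefl_insert ha horth_a] at hneg
    obtain ⟨γ, hγs, hγ⟩ := ih hsA (hP.sRefl_mem_of_neg_notMem hR (hAR haA) hβ haβ) hneg
    refine ⟨γ, Finset.mem_insert_of_mem hγs, ?_⟩
    by_contra hγβ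
    have hγR : γ ∈ R := hAR (hsA hγs)
    have h := hsharp.neg_sRefl_sRefl_mem haA (hsA hγs) (hne γ hγs)
      (hP.sRefl_mem_of_neg_notMem hR hγR hβ hγβ)
      (by rwa [← sRefl_comm_of_inner_eq_zero (horth_a γ hγs)])
    rw [sRefl_sRefl (hR.inner_self_pos hγR).ne'] at h
    exact haβ h

/-- Under property `##`, if `A₂ ⊆ A` and `β > 0` satisfy `S_{A₂}(β) < 0`, then there is
`α ∈ A₂` with `s_α(β) < 0`. -/
theorem statement9 (R P : Set V) (A : Finset V) (hR : IsRootSystem R)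
    (hP : IsPositiveSystem R P) (hA : IsSOS R ↑A) (hsharp2 : PropSharpSharp P A)
    (A₂ : Finset V) (hA₂ : A₂ ⊆ A) (β : V) (hβ : β ∈ P)
    (hneg : -(SRefl A₂ β) ∈ P) :
    ∃ α ∈ A₂, -(sRefl α β) ∈ P :=
  hsharp2.exists_neg_sRefl_mem hR hP hA.1 (hA.pairwise_inner_eq_zero hR hP hsharp2) hA₂ hβ hneg
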